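/- arXiv:1909.05512 — 2 statements merged into one kernel-verified Lean document; each statement's English description precedes it below -/
import Mathlib

section
/- There is an isometry of symmetric bilinear forms over ℤ between (ℤ⁹, 8⟨1⟩⊕⟨-1⟩) and (ℤ⁸⊕ℤ, E₈⊕⟨-1⟩) carrying the vector x=(1,…,1,3) to (0,1). -/
open Matrix BigOperators

def lam9 (v w : Fin 9 → ℤ) : ℤ := ∑ i : Fin 9, (if i = 8 then (-1 : ℤ) else 1) * v i * w i

def x9 : Fin 9 → ℤ := fun i => if i = 8 then 3 else 1

def E8 : Matrix (Fin 8) (Fin 8) ℤ :=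
  !![2,-1,0,0,0,0,0,0;
    -1,2,-1,0,0,0,0,0;
    0,-1,2,-1,0,0,0,0;
    0,0,-1,2,-1,0,0,0;
    0,0,0,-1,2,-1,0,-1;
    0,0,0,0,-1,2,-1,0;
    0,0,0,0,0,-1,2,0;
    0,0,0,0,-1,0,0,2]

/-- The form E₈ ⊕ ⟨-1⟩ on ℤ⁸ ⊕ ℤ. -/
def E8negOne : Matrix (Fin 8 ⊕ Fin 1) (Fin 8 ⊕ Fin 1) ℤ :=
  Matrix.fromBlocks E8 0 0 (-1 : Matrix (Fin 1) (Fin 1) ℤ)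

/-- The forward matrix, as a 9×9 literal. -/
def Amat : Matrix (Fin 9) (Fin 9) ℤ :=
  !![-1,-1,-1,-1,-1,-1,-1,-2,3;
    -2,-2,-2,-2,-2,-2,-3,-3,6;
    -3,-3,-3,-3,-3,-4,-4,-4,9;
    -4,-4,-4,-4,-5,-5,-5,-5,12;
    -5,-5,-5,-6,-6,-6,-6,-6,15;
    -3,-3,-4,-4,-4,-4,-4,-4,10;
    -1,-2,-2,-2,-2,-2,-2,-2,5;
    -3,-3,-3,-3,-3,-3,-3,-3,8;
    -1,-1,-1,-1,-1,-1,-1,-1,3]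

/-- The inverse matrix, as a 9×9 literal. -/
def Bmat : Matrix (Fin 9) (Fin 9) ℤ :=
  !![0,0,0,0,0,0,1,-1,1;
    0,0,0,0,0,1,-1,-1,1;
    0,0,0,0,1,-1,0,-1,1;
    0,0,0,1,-1,0,0,0,1;
    0,0,1,-1,0,0,0,0,1;
    0,1,-1,0,0,0,0,0,1;
    1,-1,0,0,0,0,0,0,1;
    -1,0,0,0,0,0,0,0,1;
    0,0,0,0,0,0,0,-1,3]

/-- Forward matrix indexed by `Fin 8 ⊕ Fin 1` rows. -/
def A' : Matrix (Fin 8 ⊕ Fin 1) (Fin 9) ℤ :=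
  Amat.submatrix (finSumFinEquiv : Fin 8 ⊕ Fin 1 ≃ Fin 9) id

/-- Inverse matrix indexed by `Fin 8 ⊕ Fin 1` columns. -/
def B' : Matrix (Fin 9) (Fin 8 ⊕ Fin 1) ℤ :=
  Bmat.submatrix id (finSumFinEquiv : Fin 8 ⊕ Fin 1 ≃ Fin 9)

def G9 : Matrix (Fin 9) (Fin 9) ℤ :=
  Matrix.diagonal (fun i => if i = 8 then (-1 : ℤ) else 1)

lemma AB : A' * B' = 1 := by decide
lemma BA : B' * A' = 1 := by decide
lemma gram : A'ᵀ * E8negOne * A' = G9 := by decide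

lemma lam9_eq (v w : Fin 9 → ℤ) : lam9 v w = v ⬝ᵥ G9.mulVec w := by
  unfold lam9 G9
  simp [Matrix.mulVec_diagonal, dotProduct, mul_comm, mul_assoc, mul_left_comm]

/-- There is an isometry (ℤ⁹, 8⟨1⟩⊕⟨-1⟩) ≅ (ℤ⁸⊕ℤ, E₈⊕⟨-1⟩)
carrying x = (1,…,1,3) to (0,1). -/
theorem isometry_to_E8_plus_negOne :
    ∃ e : (Fin 9 → ℤ) ≃ₗ[ℤ] (Fin 8 ⊕ Fin 1 → ℤ),
      (∀ v w : Fin 9 → ℤ, lam9 v w = (e v) ⬝ᵥ E8negOne.mulVec (e w)) ∧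
      e x9 = Sum.elim (0 : Fin 8 → ℤ) (1 : Fin 1 → ℤ) := by
  refine ⟨LinearEquiv.ofLinear A'.mulVecLin B'.mulVecLin ?_ ?_, ?_, ?_⟩
  · rw [← Matrix.mulVecLin_mul, AB, Matrix.mulVecLin_one]
  · rw [← Matrix.mulVecLin_mul, BA, Matrix.mulVecLin_one]
  · intro v w
    show lam9 v w = A'.mulVec v ⬝ᵥ E8negOne.mulVec (A'.mulVec w)
    rw [lam9_eq, ← _root_.gram]
    rw [Matrix.dotProduct_mulVec, Matrix.dotProduct_mulVec,
      Matrix.vecMul_mulVec, Matrix.dotProduct_mulVec, ← Matrix.vecMul_vecMul,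
      ← Matrix.vecMul_vecMul]
  · show A'.mulVec x9 = _
    decide
end

section
/- The forms E₈ ⊕ ⟨1⟩ and 9⟨1⟩ on ℤ⁹ are not isometric. -/
open Matrix BigOperators

/-- The form E₈ ⊕ ⟨1⟩ on ℤ⁸ ⊕ ℤ. -/
def E8one : Matrix (Fin 8 ⊕ Fin 1) (Fin 8 ⊕ Fin 1) ℤ :=
  Matrix.fromBlocks E8 0 0 (1 : Matrix (Fin 1) (Fin 1) ℤ)

set_option maxHeartbeats 1000000 in
lemma E8one_quad_eval (v : Fin 8 ⊕ Fin 1 → ℤ) :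
    v ⬝ᵥ E8one.mulVec v =
      2*(v (.inl 0))^2 + 2*(v (.inl 1))^2 + 2*(v (.inl 2))^2 + 2*(v (.inl 3))^2 +
      2*(v (.inl 4))^2 + 2*(v (.inl 5))^2 + 2*(v (.inl 6))^2 + 2*(v (.inl 7))^2
      - 2*(v (.inl 0))*(v (.inl 1)) - 2*(v (.inl 1))*(v (.inl 2))
      - 2*(v (.inl 2))*(v (.inl 3)) - 2*(v (.inl 3))*(v (.inl 4))
      - 2*(v (.inl 4))*(v (.inl 5)) - 2*(v (.inl 5))*(v (.inl 6))
      - 2*(v (.inl 4))*(v (.inl 7)) + (v (.inr 0))^2 := by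
  simp only [E8one, Matrix.mulVec, dotProduct, Fintype.sum_sum_type, Fin.sum_univ_eight,
    Fin.sum_univ_one, Matrix.fromBlocks_apply₁₁, Matrix.fromBlocks_apply₁₂,
    Matrix.fromBlocks_apply₂₁, Matrix.fromBlocks_apply₂₂, Matrix.zero_apply,
    Matrix.one_apply_eq, show E8 0 0 = 2 from by decide, show E8 0 1 = -1 from by decide, show E8 0 2 = 0 from by decide, show E8 0 3 = 0 from by decide, show E8 0 4 = 0 from by decide, show E8 0 5 = 0 from by decide, show E8 0 6 = 0 from by decide, show E8 0 7 = 0 from by decide, show E8 1 0 = -1 from by decide, show E8 1 1 = 2 from by decide, show E8 1 2 = -1 from by decide, show E8 1 3 = 0 from by decide, show E8 1 4 = 0 from by decide, show E8 1 5 = 0 from by decide, show E8 1 6 = 0 from by decide, show E8 1 7 = 0 from by decide, show E8 2 0 = 0 from by decide, show E8 2 1 = -1 from by decide, show E8 2 2 = 2 from by decide, show E8 2 3 = -1 from by decide, show E8 2 4 = 0 from by decide, show E8 2 5 = 0 from by decide, show E8 2 6 = 0 from by decide, show E8 2 7 = 0 from by decide, show E8 3 0 = 0 from by decide, show E8 3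 1 = 0 from by decide, show E8 3 2 = -1 from by decide, show E8 3 3 = 2 from by decide, show E8 3 4 = -1 from by decide, show E8 3 5 = 0 from by decide, show E8 3 6 = 0 from by decide, show E8 3 7 = 0 from by decide, show E8 4 0 = 0 from by decide, show E8 4 1 = 0 from by decide, show E8 4 2 = 0 from by decide, show E8 4 3 = -1 from by decide, show E8 4 4 = 2 from by decide, show E8 4 5 = -1 from by decide, show E8 4 6 = 0 from by decide, show E8 4 7 = -1 from by decide, show E8 5 0 = 0 from by decide, show E8 5 1 = 0 from by decide, show E8 5 2 = 0 from by decide, show E8 5 3 = 0 from by decide, show E8 5 4 = -1 from by decide, show E8 5 5 = 2 from by decide, show E8 5 6 = -1 from by decide, show E8 5 7 = 0 from by decide, show E8 6 0 = 0 from by decide, show E8 6 1 = 0 from by decide, show E8 6 2 = 0 from by decide, show E8 6 3 = 0 from by decide, show E8 6 4 = 0 from by decide, show E8 6 5 = -1 from by decide, show E8 6 6 = 2 from by decide, show E8 6 7 = 0 from by decide, show E8 7 0 = 0 from by decide, show E8 7 1 = 0 from by decide, show E8 7 2 = 0 from by decide, show E8 7 3 = 0 from by decide, show E8 7 4 = -1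 from by decide, show E8 7 5 = 0 from by decide, show E8 7 6 = 0 from by decide, show E8 7 7 = 2 from by decide]
  ring

/-- The arithmetic core: the E₈ ⊕ ⟨1⟩ quadratic form takes the value 1 only at `±(0,1)`,
via a sum-of-squares (Cholesky) certificate for positive definiteness of E₈ and the
evenness of the E₈ form. -/
lemma sos_core (a0 a1 a2 a3 a4 a5 a6 a7 t : ℤ)
    (h : 2*a0^2 + 2*a1^2 + 2*a2^2 + 2*a3^2 + 2*a4^2 + 2*a5^2 + 2*a6^2 + 2*a7^2
      - 2*a0*a1 - 2*a1*a2 - 2*a2*a3 - 2*a3*a4 - 2*a4*a5 - 2*a5*a6 - 2*a4*a7 + t^2 = 1) :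
    a0 = 0 ∧ a1 = 0 ∧ a2 = 0 ∧ a3 = 0 ∧ a4 = 0 ∧ a5 = 0 ∧ a6 = 0 ∧ a7 = 0 ∧
      (t = 1 ∨ t = -1) := by
  have hkey : 840*(1 - t^2) = 420*(2*a0-a1)^2 + 140*(3*a1-2*a2)^2 + 70*(4*a2-3*a3)^2 + 42*(5*a3-4*a4)^2 + 28*(6*a4-5*a5-5*a7)^2 + 20*(7*a5-6*a6-5*a7)^2 + 15*(8*a6-5*a7)^2 + 105*a7^2 := by linear_combination -840*h
  have ht2 : t^2 ≤ 1 := by linarith [sq_nonneg (2*a0-a1), sq_nonneg (3*a1-2*a2), sq_nonneg (4*a2-3*a3), sq_nonneg (5*a3-4*a4), sq_nonneg (6*a4-5*a5-5*a7), sq_nonneg (7*a5-6*a6-5*a7), sq_nonneg (8*a6-5*a7), sq_nonneg a7]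
  obtain ⟨X, hX⟩ : ∃ X : ℤ, 2*X + t^2 = 1 :=
    ⟨a0^2+a1^2+a2^2+a3^2+a4^2+a5^2+a6^2+a7^2-a0*a1-a1*a2-a2*a3-a3*a4-a4*a5-a5*a6-a4*a7,
      by linear_combination h⟩
  have ht0 : t ≠ 0 := by rintro rfl; norm_num at hX; omega
  have ht1 : -1 ≤ t ∧ t ≤ 1 := by constructor <;> nlinarith
  have htor : t = 1 ∨ t = -1 := by rcases ht1 with ⟨u1, u2⟩; omega
  have hts : t^2 = 1 := by rcases htor with rfl | rfl <;> norm_num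
  rw [hts] at hkey
  have e0 : (2*a0-a1)^2 = 0 := by linarith [sq_nonneg (2*a0-a1), sq_nonneg (3*a1-2*a2), sq_nonneg (4*a2-3*a3), sq_nonneg (5*a3-4*a4), sq_nonneg (6*a4-5*a5-5*a7), sq_nonneg (7*a5-6*a6-5*a7), sq_nonneg (8*a6-5*a7), sq_nonneg a7]
  have e1 : (3*a1-2*a2)^2 = 0 := by linarith [sq_nonneg (2*a0-a1), sq_nonneg (3*a1-2*a2), sq_nonneg (4*a2-3*a3), sq_nonneg (5*a3-4*a4), sq_nonneg (6*a4-5*a5-5*a7), sq_nonneg (7*a5-6*a6-5*a7), sq_nonneg (8*a6-5*a7), sq_nonneg a7]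
  have e2 : (4*a2-3*a3)^2 = 0 := by linarith [sq_nonneg (2*a0-a1), sq_nonneg (3*a1-2*a2), sq_nonneg (4*a2-3*a3), sq_nonneg (5*a3-4*a4), sq_nonneg (6*a4-5*a5-5*a7), sq_nonneg (7*a5-6*a6-5*a7), sq_nonneg (8*a6-5*a7), sq_nonneg a7]
  have e3 : (5*a3-4*a4)^2 = 0 := by linarith [sq_nonneg (2*a0-a1), sq_nonneg (3*a1-2*a2), sq_nonneg (4*a2-3*a3), sq_nonneg (5*a3-4*a4), sq_nonneg (6*a4-5*a5-5*a7), sq_nonneg (7*a5-6*a6-5*a7), sq_nonneg (8*a6-5*a7), sq_nonneg a7]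
  have e4 : (6*a4-5*a5-5*a7)^2 = 0 := by linarith [sq_nonneg (2*a0-a1), sq_nonneg (3*a1-2*a2), sq_nonneg (4*a2-3*a3), sq_nonneg (5*a3-4*a4), sq_nonneg (6*a4-5*a5-5*a7), sq_nonneg (7*a5-6*a6-5*a7), sq_nonneg (8*a6-5*a7), sq_nonneg a7]
  have e5 : (7*a5-6*a6-5*a7)^2 = 0 := by linarith [sq_nonneg (2*a0-a1), sq_nonneg (3*a1-2*a2), sq_nonneg (4*a2-3*a3), sq_nonneg (5*a3-4*a4), sq_nonneg (6*a4-5*a5-5*a7), sq_nonneg (7*a5-6*a6-5*a7), sq_nonneg (8*a6-5*a7), sq_nonneg a7]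
  have e6 : (8*a6-5*a7)^2 = 0 := by linarith [sq_nonneg (2*a0-a1), sq_nonneg (3*a1-2*a2), sq_nonneg (4*a2-3*a3), sq_nonneg (5*a3-4*a4), sq_nonneg (6*a4-5*a5-5*a7), sq_nonneg (7*a5-6*a6-5*a7), sq_nonneg (8*a6-5*a7), sq_nonneg a7]
  have e7 : a7^2 = 0 := by linarith [sq_nonneg (2*a0-a1), sq_nonneg (3*a1-2*a2), sq_nonneg (4*a2-3*a3), sq_nonneg (5*a3-4*a4), sq_nonneg (6*a4-5*a5-5*a7), sq_nonneg (7*a5-6*a6-5*a7), sq_nonneg (8*a6-5*a7), sq_nonneg a7]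
  have z0 := pow_eq_zero_iff (n := 2) (by norm_num) |>.mp e0
  have z1 := pow_eq_zero_iff (n := 2) (by norm_num) |>.mp e1
  have z2 := pow_eq_zero_iff (n := 2) (by norm_num) |>.mp e2
  have z3 := pow_eq_zero_iff (n := 2) (by norm_num) |>.mp e3
  have z4 := pow_eq_zero_iff (n := 2) (by norm_num) |>.mp e4
  have z5 := pow_eq_zero_iff (n := 2) (by norm_num) |>.mp e5
  have z6 := pow_eq_zero_iff (n := 2) (by norm_num) |>.mp e6
  have z7 := pow_eq_zero_iff (n := 2) (by norm_num) |>.mp e7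
  refine ⟨by omega, by omega, by omega, by omega, by omega, by omega, by omega, by omega, htor⟩

/-- The only vectors of norm 1 for E₈ ⊕ ⟨1⟩ are `±(0, 1)`. -/
lemma norm_one_vec (v : Fin 8 ⊕ Fin 1 → ℤ) (h : v ⬝ᵥ E8one.mulVec v = 1) :
    (∀ j : Fin 8, v (.inl j) = 0) ∧ (v (.inr 0) = 1 ∨ v (.inr 0) = -1) := by
  rw [E8one_quad_eval] at h
  obtain ⟨h0, h1, h2, h3, h4, h5, h6, h7, ht⟩ := sos_core _ _ _ _ _ _ _ _ _ h
  exact ⟨fun j => by fin_cases j <;> assumption, ht⟩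

/-- The forms E₈ ⊕ ⟨1⟩ and 9⟨1⟩ on ℤ⁹ are not isometric: there is no ℤ-linear
isomorphism carrying the standard Euclidean form to E₈ ⊕ ⟨1⟩. -/
theorem E8one_not_isometric_to_nine_ones :
    ¬ ∃ e : (Fin 8 ⊕ Fin 1 → ℤ) ≃ₗ[ℤ] (Fin 8 ⊕ Fin 1 → ℤ),
      ∀ v w : Fin 8 ⊕ Fin 1 → ℤ, e v ⬝ᵥ e w = v ⬝ᵥ E8one.mulVec w := by
  rintro ⟨e, he⟩
  -- the preimages of the nine standard unit vectors all have E8one-norm 1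
  have hw : ∀ i : Fin 8 ⊕ Fin 1,
      (e.symm (Pi.single i 1)) ⬝ᵥ E8one.mulVec (e.symm (Pi.single i 1)) = 1 := by
    intro i
    have h := he (e.symm (Pi.single i 1)) (e.symm (Pi.single i 1))
    rw [e.apply_symm_apply] at h
    rw [← h]
    simp [dotProduct, Pi.single_apply]
  -- any two preimages agreeing at `.inr 0` are equal
  have hdet : ∀ i j : Fin 8 ⊕ Fin 1,
      (e.symm (Pi.single i 1)) (.inr 0) = (e.symm (Pi.single j 1)) (.inr 0) →
      e.symm (Pi.single i 1) = e.symm (Pi.single j 1) := by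
    intro i j hij
    obtain ⟨hz1, _⟩ := norm_one_vec _ (hw i)
    obtain ⟨hz2, _⟩ := norm_one_vec _ (hw j)
    funext k
    rcases k with k | k
    · rw [hz1 k, hz2 k]
    · rw [Subsingleton.elim k 0]; exact hij
  -- but preimages of distinct unit vectors are distinct
  have hinj : ∀ i j : Fin 8 ⊕ Fin 1,
      e.symm (Pi.single i 1) = e.symm (Pi.single j 1) → i = j := by
    intro i j hij
    have h := congrFun (e.symm.injective hij) i
    by_contra hne
    simp [Pi.single_apply, hne, Ne.symm hne] at h
  -- pigeonhole on three indices, each valued in {1, -1}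
  obtain ⟨_, h1⟩ := norm_one_vec _ (hw (.inl 0))
  obtain ⟨_, h2⟩ := norm_one_vec _ (hw (.inl 1))
  obtain ⟨_, h3⟩ := norm_one_vec _ (hw (.inl 2))
  rcases h1 with h1 | h1 <;> rcases h2 with h2 | h2 <;> rcases h3 with h3 | h3
  all_goals first
  | exact absurd (hinj _ _ (hdet (.inl 0) (.inl 1) (h1.trans h2.symm))) (by simp)
  | exact absurd (hinj _ _ (hdet (.inl 0) (.inl 2) (h1.trans h3.symm))) (by simp)
  | exact absurd (hinj _ _ (hdet (.inl 1) (.inl 2) (h2.trans h3.symm))) (by simp)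
end
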